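/- Let L, M, N be positive integers and a, b, c, x real numbers. Then the determinant of the complex matrix K_{2L,2M,2N} = I_{2N} ⊗ I_{2M} ⊗ T_{2L}(-a,x,a) + I_{2N} ⊗ T_{2M}(-b,0,b) ⊗ J_{2L} + T_{2N}(-c,0,c) ⊗ J_{2M} ⊗ J_{2L} equals ∏_{j=1}^{N} ∏_{s=1}^{M} ∏_{k=1}^{L} ( x^2 + 4a^2 cos^2(kπ/(2L+1)) + 4b^2 cos^2(sπ/(2M+1)) + 4c^2 cos^2(jπ/(2N+1)) )^4. (This is the partition function of the monopole-dimer model on the three-dimensional grid graph P_{2L} □ P_{2M} □ P_{2N} with vertex weights x and edge weights a, b, c along the three coordinate axes.) -/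
import Mathlib


open scoped Kronecker

/-- The `k × k` tridiagonal Toeplitz matrix `T_k(-s, z, s)` with diagonal entries `z`,
superdiagonal entries `s` and subdiagonal entries `-s`. -/
noncomputable def tridiag (k : ℕ) (s z : ℂ) : Matrix (Fin k) (Fin k) ℂ :=
  Matrix.of fun i j =>
    if (i : ℕ) = (j : ℕ) then z
    else if (i : ℕ) + 1 = (j : ℕ) then s
    else if (j : ℕ) + 1 = (i : ℕ) then -s
    else 0

/-- The `k × k` anti-diagonal matrix `J_k` with all anti-diagonal entries 1. -/
noncomputable def antidiag (k : ℕ) : Matrix (Fin k) (Fin k) ℂ :=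
  Matrix.of fun i j => if (i : ℕ) + (j : ℕ) + 1 = k then 1 else 0

/-- The matrix `K_{ℓ,m,n} = I_n ⊗ I_m ⊗ T_ℓ(-a,x,a) + I_n ⊗ T_m(-b,0,b) ⊗ J_ℓ
+ T_n(-c,0,c) ⊗ J_m ⊗ J_ℓ`. -/
noncomputable def Kmat (l m n : ℕ) (a b c x : ℝ) :
    Matrix ((Fin n × Fin m) × Fin l) ((Fin n × Fin m) × Fin l) ℂ :=
  ((1 : Matrix (Fin n) (Fin n) ℂ) ⊗ₖ (1 : Matrix (Fin m) (Fin m) ℂ)) ⊗ₖ tridiag l a x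
    + ((1 : Matrix (Fin n) (Fin n) ℂ) ⊗ₖ tridiag m b 0) ⊗ₖ antidiag l
    + (tridiag n c 0 ⊗ₖ antidiag m) ⊗ₖ antidiag l

open Finset Real Matrix

noncomputable def Pmat (k : ℕ) : Matrix (Fin k) (Fin k) ℂ :=
  Matrix.of fun m j => Complex.I ^ ((m:ℕ)+1)
    * ((Real.sin ((((j:ℕ):ℝ)+1) * (((m:ℕ):ℝ)+1) * Real.pi / ((k:ℝ)+1)) : ℝ) : ℂ)

noncomputable def Pinv (k : ℕ) : Matrix (Fin k) (Fin k) ℂ :=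
  (2 / ((k:ℂ)+1)) • (Pmat k)ᴴ

noncomputable def evals (k : ℕ) (s : ℂ) : Fin k → ℂ := fun j =>
  2 * Complex.I * s * ((Real.cos ((((j:ℕ):ℝ)+1) * Real.pi / ((k:ℝ)+1)) : ℝ) : ℂ)

noncomputable def ev (k : ℕ) (s : ℂ) (j : ℕ) : ℂ :=
  2 * Complex.I * s * ((Real.cos (((j:ℝ)+1) * Real.pi / ((k:ℝ)+1)) : ℝ) : ℂ)

lemma re_inv_exp_sub_one (t : ℝ) (h : Complex.exp (t * Complex.I) ≠ 1) :
    ((Complex.exp (t * Complex.I) - 1)⁻¹).re = -(1/2) := by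
  have hre : (Complex.exp (t * Complex.I)).re = Real.cos t := by
    simpa using Complex.exp_ofReal_mul_I_re t
  have him : (Complex.exp (t * Complex.I)).im = Real.sin t := by
    simpa using Complex.exp_ofReal_mul_I_im t
  have hcos : Real.cos t ≠ 1 := by
    intro hc
    apply h
    have hs : Real.sin t = 0 := by
      have := Real.sin_sq_add_cos_sq t
      nlinarith [sq_nonneg (Real.sin t)]
    apply Complex.ext <;> simp [hre, him, hc, hs]
  rw [Complex.inv_re]
  have h1 : (Complex.exp (t * Complex.I) - 1).re = Real.cos t - 1 := by simp [hre]
  have h2 : (Complex.exp (t * Complex.I) - 1).im = Real.sin t := by simp [him]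
  rw [Complex.normSq_apply, h1, h2]
  have hpyth := Real.sin_sq_add_cos_sq t
  have hne : (Real.cos t - 1) * (Real.cos t - 1) + Real.sin t * Real.sin t = 2 * (1 - Real.cos t) := by
    nlinarith
  rw [hne]
  have : 1 - Real.cos t ≠ 0 := by
    intro h0; apply hcos; linarith
  field_simp
  ring

lemma exp_ne_one_of_lt (t : ℝ) (h0 : 0 < t) (h2 : t < 2 * Real.pi) :
    Complex.exp (t * Complex.I) ≠ 1 := by
  intro h
  rw [Complex.exp_eq_one_iff] at h
  obtain ⟨n, hn⟩ := h
  apply_fun Complex.im at hn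
  simp [Complex.mul_im] at hn
  have ht : t = (n : ℝ) * (2 * Real.pi) := by push_cast at hn ⊢; linarith
  have hpi := Real.pi_pos
  have hn0 : (0:ℝ) < (n:ℝ) := by nlinarith
  have hn1 : (n:ℝ) < 1 := by nlinarith
  have h1 : (0:ℤ) < n := by exact_mod_cast hn0
  have h2 : n < 1 := by exact_mod_cast hn1
  omega

lemma sum_cos_shift (k d : ℕ) (hd0 : 0 < d) (hdk : d ≤ 2 * k) :
    ∑ m ∈ Finset.range k, Real.cos ((m + 1 : ℕ) * (d * Real.pi / (k + 1)))
      = (if Even d then (-1 : ℝ) else 0) := by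
  have hpi := Real.pi_pos
  have hk1 : (0:ℝ) < (k:ℝ) + 1 := by positivity
  set t : ℝ := d * Real.pi / (k + 1) with ht
  have ht0 : 0 < t := by
    apply div_pos _ hk1
    have : (0:ℝ) < (d:ℝ) := by exact_mod_cast hd0
    positivity
  have ht2 : t < 2 * Real.pi := by
    rw [ht, div_lt_iff₀ hk1]
    have hd' : (d:ℝ) ≤ 2 * k := by exact_mod_cast hdk
    nlinarith
  have hz : Complex.exp (t * Complex.I) ≠ 1 := exp_ne_one_of_lt t ht0 ht2
  have hzk : Complex.exp (t * Complex.I) ^ (k + 1) = ((-1 : ℝ) ^ d : ℝ) := by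
    rw [← Complex.exp_nat_mul]
    have h1 : ((k:ℝ) + 1) * t = d * Real.pi := by rw [ht]; field_simp
    have h1c : ((k:ℂ) + 1) * (t:ℂ) = (d:ℂ) * (Real.pi:ℂ) := by exact_mod_cast h1
    have harg : ((k + 1 : ℕ):ℂ) * ((t:ℝ) * Complex.I) = (d:ℕ) * ((Real.pi:ℂ) * Complex.I) := by
      push_cast
      linear_combination Complex.I * h1c
    rw [harg, Complex.exp_nat_mul, Complex.exp_pi_mul_I]
    push_cast
    ring
  -- sum over range (k+1) of z^m
  have hgeom : ∑ m ∈ Finset.range (k + 1), Complex.exp (t * Complex.I) ^ m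
      = (((-1:ℝ) ^ d : ℝ) - 1) * (Complex.exp (t * Complex.I) - 1)⁻¹ := by
    rw [geom_sum_eq hz, hzk]
    rw [div_eq_mul_inv]
  -- real parts
  have hre : ∀ m : ℕ, (Complex.exp (t * Complex.I) ^ m).re = Real.cos (m * t) := by
    intro m
    rw [← Complex.exp_nat_mul]
    have : (m:ℂ) * ((t:ℝ) * Complex.I) = ((m * t : ℝ):ℂ) * Complex.I := by push_cast; ring
    rw [this]
    simpa using Complex.exp_ofReal_mul_I_re (m * t)
  have hsum : ∑ m ∈ Finset.range (k + 1), Real.cos (m * t)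
      = (((-1:ℝ) ^ d) - 1) * (-(1/2)) := by
    have := congrArg Complex.re hgeom
    rw [Complex.re_sum] at this
    simp only [hre] at this
    rw [this]
    have : ((((-1:ℝ) ^ d : ℝ) - 1 : ℝ) : ℂ) = (((-1:ℝ)^d : ℝ):ℂ) - 1 := by push_cast; ring
    rw [show ((((-1:ℝ) ^ d : ℝ)):ℂ) - 1 = (((((-1:ℝ) ^ d) - 1 : ℝ)):ℂ) by push_cast; ring,
      Complex.re_ofReal_mul, re_inv_exp_sub_one t hz]
  have hsplit := Finset.sum_range_succ' (fun m : ℕ => Real.cos (m * t)) k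
  simp only [Nat.cast_zero, zero_mul, Real.cos_zero] at hsplit
  rw [hsplit] at hsum
  have : ∑ m ∈ Finset.range k, Real.cos ((m + 1:ℕ) * t) = ((-1:ℝ)^d - 1) * (-(1/2)) - 1 := by
    linarith
  rw [this]
  rcases Nat.even_or_odd d with he | ho
  · rw [if_pos he, he.neg_one_pow]; ring
  · rw [if_neg (Nat.not_even_iff_odd.mpr ho), ho.neg_one_pow]; ring

lemma sum_sin_sin_aux (k j j' : ℕ) (hj : j < k) (hj' : j' < k) (hle : j' ≤ j) :
    ∑ m ∈ Finset.range k,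
      Real.sin (((j:ℝ)+1) * ((m:ℝ)+1) * Real.pi / ((k:ℝ)+1))
        * Real.sin (((j':ℝ)+1) * ((m:ℝ)+1) * Real.pi / ((k:ℝ)+1))
      = if j = j' then ((k:ℝ)+1)/2 else 0 := by
  set θ : ℝ := Real.pi / ((k:ℝ)+1) with hθ
  have hcast : ((j - j' : ℕ) : ℝ) = (j:ℝ) - j' := by
    rw [Nat.cast_sub hle]
  have hpoint : ∀ m : ℕ,
      Real.sin (((j:ℝ)+1) * ((m:ℝ)+1) * Real.pi / ((k:ℝ)+1))
        * Real.sin (((j':ℝ)+1) * ((m:ℝ)+1) * Real.pi / ((k:ℝ)+1))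
      = (Real.cos ((m + 1 : ℕ) * ((j - j' : ℕ) * Real.pi / (k + 1)))
          - Real.cos ((m + 1 : ℕ) * ((j + j' + 2 : ℕ) * Real.pi / (k + 1)))) / 2 := by
    intro m
    have A := ((j:ℝ)+1) * ((m:ℝ)+1) * Real.pi / ((k:ℝ)+1)
    set A : ℝ := ((j:ℝ)+1) * ((m:ℝ)+1) * Real.pi / ((k:ℝ)+1) with hA
    set B : ℝ := ((j':ℝ)+1) * ((m:ℝ)+1) * Real.pi / ((k:ℝ)+1) with hB
    have h1 : ((m + 1 : ℕ):ℝ) * ((j - j' : ℕ) * Real.pi / (k + 1)) = A - B := by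
      rw [hA, hB, hcast]; push_cast; ring
    have h2 : ((m + 1 : ℕ):ℝ) * ((j + j' + 2 : ℕ) * Real.pi / (k + 1)) = A + B := by
      rw [hA, hB]; push_cast; ring
    rw [h1, h2, Real.cos_sub, Real.cos_add]
    ring
  rw [Finset.sum_congr rfl (fun m _ => hpoint m)]
  rw [← Finset.sum_div, Finset.sum_sub_distrib]
  by_cases hjj : j = j'
  · subst hjj
    rw [if_pos rfl]
    have hsum1 : ∑ m ∈ Finset.range k,
        Real.cos ((m + 1 : ℕ) * ((j - j : ℕ) * Real.pi / (k + 1))) = k := by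
      have : ∀ m ∈ Finset.range k,
          Real.cos ((m + 1 : ℕ) * ((j - j : ℕ) * Real.pi / (k + 1))) = 1 := by
        intro m _
        simp
      rw [Finset.sum_congr rfl this]
      simp
    have hsum2 : ∑ m ∈ Finset.range k,
        Real.cos ((m + 1 : ℕ) * ((j + j + 2 : ℕ) * Real.pi / (k + 1))) = -1 := by
      rw [sum_cos_shift k (j + j + 2) (by omega) (by omega), if_pos ⟨j + 1, by ring⟩]
    rw [hsum1, hsum2]
    ring
  · rw [if_neg hjj]
    have hd1 : 0 < j - j' := by omega
    have hd2 : j - j' ≤ 2 * k := by omega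
    rw [sum_cos_shift _ _ hd1 hd2, sum_cos_shift k (j + j' + 2) (by omega) (by omega)]
    have hiff : Even (j - j') ↔ Even (j + j' + 2) := by
      rw [Nat.even_iff, Nat.even_iff]
      omega
    by_cases hpar : Even (j - j')
    · rw [if_pos hpar, if_pos (hiff.mp hpar)]; ring
    · rw [if_neg hpar, if_neg (fun h => hpar (hiff.mpr h))]; ring

lemma sum_sin_sin (k j j' : ℕ) (hj : j < k) (hj' : j' < k) :
    ∑ m ∈ Finset.range k,
      Real.sin (((j:ℝ)+1) * ((m:ℝ)+1) * Real.pi / ((k:ℝ)+1))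
        * Real.sin (((j':ℝ)+1) * ((m:ℝ)+1) * Real.pi / ((k:ℝ)+1))
      = if j = j' then ((k:ℝ)+1)/2 else 0 := by
  rcases le_total j' j with h | h
  · exact sum_sin_sin_aux k j j' hj hj' h
  · have := sum_sin_sin_aux k j' j hj' hj h
    calc _ = ∑ m ∈ Finset.range k,
        Real.sin (((j':ℝ)+1) * ((m:ℝ)+1) * Real.pi / ((k:ℝ)+1))
          * Real.sin (((j:ℝ)+1) * ((m:ℝ)+1) * Real.pi / ((k:ℝ)+1)) := by
          apply Finset.sum_congr rfl; intros; ring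
      _ = if j' = j then ((k:ℝ)+1)/2 else 0 := this
      _ = if j = j' then ((k:ℝ)+1)/2 else 0 := by simp [eq_comm]


lemma Pinv_mul_Pmat (k : ℕ) : Pinv k * Pmat k = 1 := by
  have hk : ((k:ℂ)+1) ≠ 0 := by
    intro h
    have : ((k:ℝ)+1) = 0 := by exact_mod_cast congrArg Complex.re h
    nlinarith [Nat.cast_nonneg (α := ℝ) k]
  ext j j'
  rw [Matrix.mul_apply]
  have hterm : ∀ m : Fin k, Pinv k j m * Pmat k m j'
      = (2/((k:ℂ)+1)) * ((Real.sin ((((j:ℕ):ℝ)+1) * (((m:ℕ):ℝ)+1) * Real.pi / ((k:ℝ)+1))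
          * Real.sin ((((j':ℕ):ℝ)+1) * (((m:ℕ):ℝ)+1) * Real.pi / ((k:ℝ)+1)) : ℝ) : ℂ) := by
    intro m
    simp only [Pinv, Pmat, Matrix.smul_apply, Matrix.conjTranspose_apply, Matrix.of_apply]
    rw [star_mul']
    rw [show (star (Complex.I ^ ((m:ℕ)+1))) = (-Complex.I) ^ ((m:ℕ)+1) by
      rw [star_pow, Complex.star_def, Complex.conj_I]]
    have : (-Complex.I) ^ ((m:ℕ)+1) * Complex.I ^ ((m:ℕ)+1) = 1 := by
      rw [← mul_pow]
      norm_num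
    rw [smul_mul_assoc, smul_eq_mul, mul_mul_mul_comm, this]
    rw [show star ((Real.sin ((((j:ℕ):ℝ)+1) * (((m:ℕ):ℝ)+1) * Real.pi / ((k:ℝ)+1)) : ℝ) : ℂ)
        = ((Real.sin ((((j:ℕ):ℝ)+1) * (((m:ℕ):ℝ)+1) * Real.pi / ((k:ℝ)+1)) : ℝ) : ℂ) by
      rw [Complex.star_def, Complex.conj_ofReal]]
    push_cast
    ring
  rw [Finset.sum_congr rfl (fun m _ => hterm m), ← Finset.mul_sum]
  rw [← Complex.ofReal_sum]
  rw [show ∑ m : Fin k, (Real.sin ((((j:ℕ):ℝ)+1) * (((m:ℕ):ℝ)+1) * Real.pi / ((k:ℝ)+1))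
          * Real.sin ((((j':ℕ):ℝ)+1) * (((m:ℕ):ℝ)+1) * Real.pi / ((k:ℝ)+1)))
      = ∑ m ∈ Finset.range k, (Real.sin ((((j:ℕ):ℝ)+1) * ((m:ℝ)+1) * Real.pi / ((k:ℝ)+1))
          * Real.sin ((((j':ℕ):ℝ)+1) * ((m:ℝ)+1) * Real.pi / ((k:ℝ)+1)))
      from Fin.sum_univ_eq_sum_range (fun m : ℕ =>
        Real.sin ((((j:ℕ):ℝ)+1) * ((m:ℝ)+1) * Real.pi / ((k:ℝ)+1))
          * Real.sin ((((j':ℕ):ℝ)+1) * ((m:ℝ)+1) * Real.pi / ((k:ℝ)+1))) k]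
  rw [sum_sin_sin k j j' j.isLt j'.isLt]
  by_cases hjj : (j:ℕ) = (j':ℕ)
  · have : j = j' := Fin.ext hjj
    subst this
    rw [if_pos rfl, Matrix.one_apply_eq]
    push_cast
    field_simp
  · rw [if_neg hjj, Matrix.one_apply_ne (fun h => hjj (by rw [h]))]
    simp

lemma tridiag_mul_Pmat (k : ℕ) (s : ℂ) :
    tridiag k s 0 * Pmat k = Pmat k * Matrix.diagonal (evals k s) := by
  have hk0 : ((k:ℝ)+1) ≠ 0 := by positivity
  ext m j
  set θ : ℝ := Real.pi / ((k:ℝ)+1) with hθ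
  set G : ℕ → ℂ := fun r => Complex.I ^ r
    * ((Real.sin ((((j:ℕ):ℝ)+1) * (r:ℝ) * Real.pi / ((k:ℝ)+1)) : ℝ) : ℂ) with hG
  have hP : ∀ m' : Fin k, Pmat k m' j = G ((m':ℕ)+1) := by
    intro m'
    simp only [Pmat, Matrix.of_apply, hG]
    push_cast
    norm_num
  -- Step 1 : the sum
  have hsplit : ∀ m' : Fin k, tridiag k s 0 m m'
      = (if (m:ℕ)+1 = (m':ℕ) then s else 0) + (if (m':ℕ)+1 = (m:ℕ) then -s else 0) := by
    intro m'
    simp only [tridiag, Matrix.of_apply]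
    split_ifs <;> first | omega | ring
  have hzero_top : ¬ ((m:ℕ)+1 < k) → G ((m:ℕ)+2) = 0 := by
    intro hm
    have hmk : (m:ℕ)+2 = k+1 := by have := m.isLt; omega
    rw [hG]
    simp only
    rw [hmk]
    have harg : (((j:ℕ):ℝ)+1) * ((k+1:ℕ):ℝ) * Real.pi / ((k:ℝ)+1) = ((j:ℕ)+1 : ℕ) * Real.pi := by
      push_cast
      field_simp
    rw [harg, Real.sin_nat_mul_pi]
    simp
  have hzero_bot : (m:ℕ) = 0 → G (m:ℕ) = 0 := by
    intro hm
    rw [hG]; simp only [hm]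
    norm_num
  have hsum : ∑ m' : Fin k, tridiag k s 0 m m' * Pmat k m' j
      = s * G ((m:ℕ)+2) + (- s) * G (m:ℕ) := by
    rw [Finset.sum_congr rfl (fun m' _ => by rw [hsplit m', hP m', add_mul])]
    rw [Finset.sum_add_distrib]
    congr 1
    · by_cases hm : (m:ℕ)+1 < k
      · rw [Finset.sum_eq_single (⟨(m:ℕ)+1, hm⟩ : Fin k)]
        · norm_num
        · intro b _ hb
          rw [if_neg, zero_mul]
          intro hc
          exact hb (Fin.ext (by simp; omega))
        · intro h; exact absurd (Finset.mem_univ _) h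
      · rw [Finset.sum_eq_zero, hzero_top hm, mul_zero]
        intro b _
        rw [if_neg, zero_mul]
        intro hc
        have := b.isLt; omega
    · by_cases hm : 0 < (m:ℕ)
      · rw [Finset.sum_eq_single (⟨(m:ℕ)-1, by have := m.isLt; omega⟩ : Fin k)]
        · rw [if_pos (by simp; omega)]
          congr 2
          simp; omega
        · intro b _ hb
          rw [if_neg, zero_mul]
          intro hc
          exact hb (Fin.ext (by simp; omega))
        · intro h; exact absurd (Finset.mem_univ _) h
      · rw [Finset.sum_eq_zero, hzero_bot (by omega), mul_zero]
        intro b _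
        rw [if_neg, zero_mul]
        omega
  -- Step 2 : the trig identity
  have key : ∀ r : ℕ, s * G (r+2) + (-s) * G r = G (r+1) * evals k s j := by
    intro r
    have trig : Real.sin ((((j:ℕ):ℝ)+1) * ((r:ℝ)+2) * Real.pi / ((k:ℝ)+1))
        + Real.sin ((((j:ℕ):ℝ)+1) * (r:ℝ) * Real.pi / ((k:ℝ)+1))
        = 2 * Real.sin ((((j:ℕ):ℝ)+1) * ((r:ℝ)+1) * Real.pi / ((k:ℝ)+1))
          * Real.cos ((((j:ℕ):ℝ)+1) * Real.pi / ((k:ℝ)+1)) := by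
      have h1 : (((j:ℕ):ℝ)+1) * ((r:ℝ)+2) * Real.pi / ((k:ℝ)+1)
          = (((j:ℕ):ℝ)+1) * ((r:ℝ)+1) * Real.pi / ((k:ℝ)+1)
            + (((j:ℕ):ℝ)+1) * Real.pi / ((k:ℝ)+1) := by field_simp; ring
      have h2 : (((j:ℕ):ℝ)+1) * (r:ℝ) * Real.pi / ((k:ℝ)+1)
          = (((j:ℕ):ℝ)+1) * ((r:ℝ)+1) * Real.pi / ((k:ℝ)+1)
            - (((j:ℕ):ℝ)+1) * Real.pi / ((k:ℝ)+1) := by field_simp; ring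
      rw [h1, h2, Real.sin_add, Real.sin_sub]
      ring
    rw [hG]
    simp only [evals]
    push_cast
    have := congrArg (fun u : ℝ => (u : ℂ)) trig
    push_cast at this
    linear_combination (s * Complex.I^(r+2)) * this
      - (s * Complex.I^r
          * Complex.sin ((((j:ℕ):ℂ)+1) * (r:ℂ) * (Real.pi:ℂ) / ((k:ℂ)+1))) * Complex.I_sq
  rw [Matrix.mul_apply, Matrix.mul_apply, hsum]
  rw [Finset.sum_eq_single j]
  · rw [Matrix.diagonal_apply_eq, hP, key (m:ℕ)]
  · intro b _ hb
    rw [Matrix.diagonal_apply_ne _ hb, mul_zero]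
  · intro h; exact absurd (Finset.mem_univ _) h

lemma antidiag_mul {k : ℕ} (M : Matrix (Fin k) (Fin k) ℂ) :
    antidiag k * M = Matrix.of fun i j => M i.rev j := by
  ext i j
  rw [Matrix.mul_apply, Finset.sum_eq_single i.rev]
  · simp only [antidiag, Matrix.of_apply, Fin.val_rev]
    rw [if_pos (by have := i.isLt; omega), one_mul]
  · intro b _ hb
    simp only [antidiag, Matrix.of_apply]
    rw [if_neg, zero_mul]
    intro hc
    exact hb (Fin.ext (by simp [Fin.val_rev]; omega))
  · intro h; exact absurd (Finset.mem_univ _) h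

lemma mul_antidiag {k : ℕ} (M : Matrix (Fin k) (Fin k) ℂ) :
    M * antidiag k = Matrix.of fun i j => M i j.rev := by
  ext i j
  rw [Matrix.mul_apply, Finset.sum_eq_single j.rev]
  · simp only [antidiag, Matrix.of_apply, Fin.val_rev]
    rw [if_pos (by have := j.isLt; omega), mul_one]
  · intro b _ hb
    simp only [antidiag, Matrix.of_apply]
    rw [if_neg, mul_zero]
    intro hc
    exact hb (Fin.ext (by simp [Fin.val_rev]; omega))
  · intro h; exact absurd (Finset.mem_univ _) h

lemma antidiag_mul_antidiag (k : ℕ) : antidiag k * antidiag k = 1 := by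
  rw [antidiag_mul]
  ext i j
  simp only [Matrix.of_apply, antidiag, Fin.val_rev, Matrix.one_apply]
  have hi := i.isLt; have hj := j.isLt
  by_cases h : i = j
  · subst h
    rw [if_pos (by omega), if_pos rfl]
  · rw [if_neg, if_neg h]
    intro hc
    exact h (Fin.ext (by omega))

lemma antidiag_tridiag_anticomm (k : ℕ) (s : ℂ) :
    antidiag k * tridiag k s 0 = -(tridiag k s 0 * antidiag k) := by
  rw [antidiag_mul, mul_antidiag]
  ext i j
  have hi := i.isLt; have hj := j.isLt
  simp only [Matrix.of_apply, tridiag, Matrix.neg_apply, Fin.val_rev]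
  split_ifs <;> first | omega | ring

lemma tridiag_split (k : ℕ) (s z : ℂ) : tridiag k s z = z • 1 + tridiag k s 0 := by
  ext i j
  simp only [tridiag, Matrix.of_apply, Matrix.add_apply, Matrix.smul_apply, Matrix.one_apply,
    smul_eq_mul]
  by_cases h : i = j
  · subst h; simp
  · have h' : ¬ ((i:ℕ) = (j:ℕ)) := fun hc => h (Fin.ext hc)
    rw [if_neg h', if_neg h', if_neg h]
    split_ifs <;> ring

section anticomm
variable {Q : Type*} [Fintype Q] [DecidableEq Q]

lemma det_anticomm (A B : Matrix Q Q ℂ) (hB : B * B = 1) (hAB : A * B = -(B * A)) (x μ : ℂ) :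
    ((x • 1 + A + μ • B).det) * ((x • 1 + A - μ • B).det)
      = ((x^2 - μ^2) • (1 : Matrix Q Q ℂ) - A * A).det := by
  have hBA : B * A = -(A * B) := by rw [hAB, neg_neg]
  have h1 : (x • 1 + A - μ • B).det = (x • 1 - A - μ • B).det := by
    have key : B * (x • 1 + A - μ • B) * B = x • 1 - A - μ • B := by
      have e1 : B * (x • (1 : Matrix Q Q ℂ)) * B = x • 1 := by
        rw [mul_smul_comm, smul_mul_assoc, mul_one, hB]
      have e2 : B * A * B = -A := by
        rw [hBA, neg_mul, mul_assoc, hB, mul_one]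
      have e3 : B * (μ • B) * B = μ • B := by
        rw [mul_smul_comm, smul_mul_assoc, mul_assoc, hB, mul_one]
      calc B * (x • 1 + A - μ • B) * B
          = B * (x • (1:Matrix Q Q ℂ)) * B + B * A * B - B * (μ • B) * B := by
            noncomm_ring
        _ = x • 1 - A - μ • B := by rw [e1, e2, e3]; abel
    have hdetB : (B).det * (B).det = 1 := by rw [← Matrix.det_mul, hB, Matrix.det_one]
    calc (x • 1 + A - μ • B).det
        = (B).det * (x • 1 + A - μ • B).det * (B).det := by
          rw [mul_comm ((B).det) ((x • 1 + A - μ • B).det), mul_assoc, hdetB, mul_one]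
      _ = (B * (x • 1 + A - μ • B) * B).det := by rw [Matrix.det_mul, Matrix.det_mul]
      _ = (x • 1 - A - μ • B).det := by rw [key]
  rw [h1, ← Matrix.det_mul]
  congr 1
  have hAB0 : A * B + B * A = 0 := by rw [hAB]; abel
  have expand : (x • 1 + A + μ • B) * (x • 1 - A - μ • B)
      = (x^2 - μ^2) • (1 : Matrix Q Q ℂ) - A * A := by
    simp only [add_mul, sub_mul, mul_add, mul_sub, smul_mul_assoc, mul_smul_comm, one_mul,
      mul_one, hB, smul_smul, hBA, smul_neg]
    simp only [smul_add, smul_sub, smul_neg, smul_smul]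
    module
  rw [expand]

end anticomm

lemma Pmat_mul_Pinv (k : ℕ) : Pmat k * Pinv k = 1 :=
  mul_eq_one_comm.mp (Pinv_mul_Pmat k)

lemma tridiag_eq_conj (k : ℕ) (s : ℂ) :
    tridiag k s 0 = Pmat k * Matrix.diagonal (evals k s) * Pinv k := by
  calc tridiag k s 0 = tridiag k s 0 * (Pmat k * Pinv k) := by rw [Pmat_mul_Pinv, mul_one]
    _ = (tridiag k s 0 * Pmat k) * Pinv k := by rw [mul_assoc]
    _ = Pmat k * Matrix.diagonal (evals k s) * Pinv k := by rw [tridiag_mul_Pmat]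

lemma tridiag_sq_conj (k : ℕ) (s : ℂ) :
    tridiag k s 0 * tridiag k s 0
      = Pmat k * Matrix.diagonal (fun j => evals k s j ^ 2) * Pinv k := by
  rw [tridiag_eq_conj k s]
  calc (Pmat k * Matrix.diagonal (evals k s) * Pinv k) * (Pmat k * Matrix.diagonal (evals k s) * Pinv k)
      = Pmat k * (Matrix.diagonal (evals k s) * ((Pinv k * Pmat k) * Matrix.diagonal (evals k s))) * Pinv k := by
        simp only [mul_assoc]
    _ = Pmat k * (Matrix.diagonal (evals k s) * Matrix.diagonal (evals k s)) * Pinv k := by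
        rw [Pinv_mul_Pmat, one_mul, mul_assoc]
    _ = Pmat k * Matrix.diagonal (fun j => evals k s j ^ 2) * Pinv k := by
        rw [Matrix.diagonal_mul_diagonal]
        congr 1
        congr 1
        funext j
        ring

lemma kron_conj {I J : Type*} [Fintype I] [DecidableEq I] [Fintype J] [DecidableEq J]
    (P1 Pi1 X : Matrix I I ℂ) (P2 Pi2 Y : Matrix J J ℂ) :
    (P1 ⊗ₖ P2) * (X ⊗ₖ Y) * (Pi1 ⊗ₖ Pi2) = (P1 * X * Pi1) ⊗ₖ (P2 * Y * Pi2) := by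
  rw [← Matrix.mul_kronecker_mul, ← Matrix.mul_kronecker_mul]

section kron
variable {Q : Type*} [Fintype Q] [DecidableEq Q]

lemma det_one_kron_add_diag_kron (k : ℕ) (d : Fin k → ℂ) (A B : Matrix Q Q ℂ) :
    ((1 : Matrix (Fin k) (Fin k) ℂ) ⊗ₖ A + Matrix.diagonal d ⊗ₖ B).det
      = ∏ j : Fin k, (A + d j • B).det := by
  have hblock : (1 : Matrix (Fin k) (Fin k) ℂ) ⊗ₖ A + Matrix.diagonal d ⊗ₖ B
      = (Matrix.blockDiagonal fun j => A + d j • B).submatrix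
          (Equiv.prodComm (Fin k) Q) (Equiv.prodComm (Fin k) Q) := by
    ext ⟨i1, i2⟩ ⟨j1, j2⟩
    simp only [Matrix.add_apply, Matrix.kroneckerMap_apply, Matrix.one_apply,
      Matrix.diagonal_apply, Matrix.submatrix_apply, Equiv.prodComm_apply, Prod.swap,
      Matrix.blockDiagonal_apply, Matrix.smul_apply, smul_eq_mul]
    by_cases h : i1 = j1
    · subst h; simp
    · simp [h]
  rw [hblock, Matrix.det_submatrix_equiv_self, Matrix.det_blockDiagonal]

lemma det_one_kron_add_tridiag_kron (k : ℕ) (s : ℂ) (A B : Matrix Q Q ℂ) :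
    ((1 : Matrix (Fin k) (Fin k) ℂ) ⊗ₖ A + tridiag k s 0 ⊗ₖ B).det
      = ∏ j : Fin k, (A + evals k s j • B).det := by
  have hconj : (1 : Matrix (Fin k) (Fin k) ℂ) ⊗ₖ A + tridiag k s 0 ⊗ₖ B
      = (Pmat k ⊗ₖ (1 : Matrix Q Q ℂ))
        * ((1 : Matrix (Fin k) (Fin k) ℂ) ⊗ₖ A + Matrix.diagonal (evals k s) ⊗ₖ B)
        * (Pinv k ⊗ₖ (1 : Matrix Q Q ℂ)) := by
    rw [mul_add, add_mul, ← Matrix.mul_kronecker_mul, ← Matrix.mul_kronecker_mul,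
      ← Matrix.mul_kronecker_mul, ← Matrix.mul_kronecker_mul]
    rw [mul_one, one_mul, mul_one, one_mul, Pmat_mul_Pinv, mul_one, ← tridiag_eq_conj]
  rw [hconj, Matrix.det_mul, Matrix.det_mul]
  rw [mul_comm ((Pmat k ⊗ₖ (1 : Matrix Q Q ℂ)).det), mul_assoc, ← Matrix.det_mul,
    ← Matrix.mul_kronecker_mul, Pmat_mul_Pinv, one_mul, Matrix.one_kronecker_one,
    Matrix.det_one, mul_one]
  exact det_one_kron_add_diag_kron k (evals k s) A B

end kron

lemma det_w_sub_sq (l m : ℕ) (a b w : ℂ) :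
    (w • (1 : Matrix (Fin m × Fin l) (Fin m × Fin l) ℂ)
      - (1 : Matrix (Fin m) (Fin m) ℂ) ⊗ₖ (tridiag l a 0 * tridiag l a 0)
      - (tridiag m b 0 * tridiag m b 0) ⊗ₖ (1 : Matrix (Fin l) (Fin l) ℂ)).det
    = ∏ s' : Fin m, ∏ k' : Fin l, (w - evals m b s' ^ 2 - evals l a k' ^ 2) := by
  set Q : Matrix (Fin m × Fin l) (Fin m × Fin l) ℂ := Pmat m ⊗ₖ Pmat l with hQ
  set Qi : Matrix (Fin m × Fin l) (Fin m × Fin l) ℂ := Pinv m ⊗ₖ Pinv l with hQi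
  have hQQi : Q * Qi = 1 := by
    rw [hQ, hQi, ← Matrix.mul_kronecker_mul, Pmat_mul_Pinv, Pmat_mul_Pinv,
      Matrix.one_kronecker_one]
  have hQiQ : Qi * Q = 1 := mul_eq_one_comm.mp hQQi
  have hconj : w • (1 : Matrix (Fin m × Fin l) (Fin m × Fin l) ℂ)
      - (1 : Matrix (Fin m) (Fin m) ℂ) ⊗ₖ (tridiag l a 0 * tridiag l a 0)
      - (tridiag m b 0 * tridiag m b 0) ⊗ₖ (1 : Matrix (Fin l) (Fin l) ℂ)
      = Q * (w • (1 : Matrix (Fin m × Fin l) (Fin m × Fin l) ℂ)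
          - (1 : Matrix (Fin m) (Fin m) ℂ) ⊗ₖ Matrix.diagonal (fun j => evals l a j ^ 2)
          - Matrix.diagonal (fun j => evals m b j ^ 2) ⊗ₖ (1 : Matrix (Fin l) (Fin l) ℂ)) * Qi := by
    have h1 : Q * ((1 : Matrix (Fin m) (Fin m) ℂ) ⊗ₖ Matrix.diagonal (fun j => evals l a j ^ 2)) * Qi
        = (1 : Matrix (Fin m) (Fin m) ℂ) ⊗ₖ (tridiag l a 0 * tridiag l a 0) := by
      rw [hQ, hQi, kron_conj, mul_one, Pmat_mul_Pinv, ← tridiag_sq_conj]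
    have h2 : Q * ((Matrix.diagonal (fun j => evals m b j ^ 2)) ⊗ₖ (1 : Matrix (Fin l) (Fin l) ℂ)) * Qi
        = (tridiag m b 0 * tridiag m b 0) ⊗ₖ (1 : Matrix (Fin l) (Fin l) ℂ) := by
      rw [hQ, hQi, kron_conj, mul_one, Pmat_mul_Pinv, ← tridiag_sq_conj]
    have h3 : Q * (w • (1 : Matrix (Fin m × Fin l) (Fin m × Fin l) ℂ)) * Qi = w • 1 := by
      rw [mul_smul_comm, smul_mul_assoc, mul_one, hQQi]
    rw [mul_sub, mul_sub, sub_mul, sub_mul, h1, h2, h3]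
  rw [hconj, Matrix.det_mul, Matrix.det_mul]
  rw [mul_comm (Q.det), mul_assoc, ← Matrix.det_mul, hQQi, Matrix.det_one, mul_one]
  have hdiag : w • (1 : Matrix (Fin m × Fin l) (Fin m × Fin l) ℂ)
      - (1 : Matrix (Fin m) (Fin m) ℂ) ⊗ₖ Matrix.diagonal (fun j => evals l a j ^ 2)
      - Matrix.diagonal (fun j => evals m b j ^ 2) ⊗ₖ (1 : Matrix (Fin l) (Fin l) ℂ)
      = Matrix.diagonal (fun p : Fin m × Fin l => w - evals m b p.1 ^ 2 - evals l a p.2 ^ 2) := by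
    ext ⟨i1, i2⟩ ⟨j1, j2⟩
    simp only [Matrix.sub_apply, Matrix.smul_apply, Matrix.one_apply, Matrix.kroneckerMap_apply,
      Matrix.diagonal_apply, smul_eq_mul, Prod.mk.injEq]
    by_cases h1 : i1 = j1 <;> by_cases h2 : i2 = j2 <;>
      simp [h1, h2, Prod.ext_iff, mul_comm] <;> ring
  rw [hdiag, Matrix.det_diagonal]
  rw [Fintype.prod_prod_type]

-- scalar helpers
lemma prod_range_two_mul_pair {β : Type*} [CommMonoid β] (N : ℕ) (f : ℕ → β) :
    ∏ j ∈ Finset.range (2*N), f j = ∏ j ∈ Finset.range N, (f j * f (2*N-1-j)) := by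
  rw [two_mul, Finset.prod_range_add, ← Finset.prod_range_reflect (fun i => f (N+i)) N,
    ← Finset.prod_mul_distrib]
  apply Finset.prod_congr rfl
  intro j hj
  rw [Finset.mem_range] at hj
  congr 2
  omega

lemma ev_reflect (K : ℕ) (s : ℂ) (j : ℕ) (hj : j < K) :
    ev (2*K) s (2*K-1-j) = - ev (2*K) s j := by
  unfold ev
  have h1 : ((2*K-1-j:ℕ):ℝ) + 1 = 2*(K:ℝ) - j := by
    have : (2*K-1-j) + 1 = 2*K - j := by omega
    rw [show ((2*K-1-j:ℕ):ℝ) = (((2*K-1-j:ℕ)):ℝ) from rfl]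
    rw [← Nat.cast_one (R := ℝ), ← Nat.cast_add, this, Nat.cast_sub (by omega)]
    push_cast; ring
  rw [h1]
  have h2 : (2*(K:ℝ) - j) * Real.pi / (((2*K:ℕ):ℝ)+1)
      = Real.pi - ((j:ℝ)+1) * Real.pi / (((2*K:ℕ):ℝ)+1) := by
    have hden : ((2*K:ℕ):ℝ) + 1 ≠ 0 := by positivity
    push_cast at hden ⊢
    field_simp
    ring
  rw [h2, Real.cos_pi_sub]
  push_cast
  ring


lemma kronecker_neg' {I J : Type*} (A : Matrix I I ℂ) (B : Matrix J J ℂ) :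
    A ⊗ₖ (-B) = -(A ⊗ₖ B) := by
  ext ⟨i1,i2⟩ ⟨j1,j2⟩
  simp [Matrix.kroneckerMap_apply]

lemma neg_kronecker' {I J : Type*} (A : Matrix I I ℂ) (B : Matrix J J ℂ) :
    (-A) ⊗ₖ B = -(A ⊗ₖ B) := by
  ext ⟨i1,i2⟩ ⟨j1,j2⟩
  simp [Matrix.kroneckerMap_apply]

lemma ev_sq (k : ℕ) (s : ℝ) (j : ℕ) :
    ev k (s:ℂ) j ^ 2
      = - ((4 * s^2 * Real.cos (((j:ℝ)+1) * Real.pi / ((k:ℝ)+1)) ^ 2 : ℝ) : ℂ) := by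
  unfold ev
  push_cast
  linear_combination (4 * (s:ℂ)^2
    * (Complex.cos (((j:ℂ)+1) * (Real.pi:ℂ) / ((k:ℂ)+1)))^2) * Complex.I_sq

lemma prod_Icc_one {β : Type*} [CommMonoid β] (N : ℕ) (f : ℕ → β) :
    ∏ j ∈ Finset.Icc 1 N, f j = ∏ j ∈ Finset.range N, f (1+j) := by
  rw [← Finset.Ico_add_one_right_eq_Icc, Finset.prod_Ico_eq_prod_range]
  simp

theorem det_Kmat_even_even_even (L M N : ℕ) (hL : 0 < L) (hM : 0 < M) (hN : 0 < N)
    (a b c x : ℝ) :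
    (Kmat (2 * L) (2 * M) (2 * N) a b c x).det =
      ((∏ j ∈ Finset.Icc 1 N, ∏ s ∈ Finset.Icc 1 M, ∏ k ∈ Finset.Icc 1 L,
        (x ^ 2 + 4 * a ^ 2 * Real.cos ((k : ℝ) * Real.pi / (2 * (L : ℝ) + 1)) ^ 2
          + 4 * b ^ 2 * Real.cos ((s : ℝ) * Real.pi / (2 * (M : ℝ) + 1)) ^ 2
          + 4 * c ^ 2 * Real.cos ((j : ℝ) * Real.pi / (2 * (N : ℝ) + 1)) ^ 2) ^ 4 : ℝ) : ℂ) := by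
  set Na := tridiag (2*L) (a:ℂ) 0 with hNa
  set Nb := tridiag (2*M) (b:ℂ) 0 with hNb
  set Jl := antidiag (2*L) with hJl
  set Jm := antidiag (2*M) with hJm
  set A0 : Matrix (Fin (2*M) × Fin (2*L)) (Fin (2*M) × Fin (2*L)) ℂ
    := (1 : Matrix (Fin (2*M)) (Fin (2*M)) ℂ) ⊗ₖ Na + Nb ⊗ₖ Jl with hA0
  set Amat : Matrix (Fin (2*M) × Fin (2*L)) (Fin (2*M) × Fin (2*L)) ℂ
    := (1 : Matrix (Fin (2*M)) (Fin (2*M)) ℂ) ⊗ₖ tridiag (2*L) (a:ℂ) (x:ℂ) + Nb ⊗ₖ Jl with hAmat'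
  set Bmat : Matrix (Fin (2*M) × Fin (2*L)) (Fin (2*M) × Fin (2*L)) ℂ := Jm ⊗ₖ Jl with hBmat
  -- step A : reassociation
  have hassoc : Kmat (2*L) (2*M) (2*N) a b c x
      = ((1 : Matrix (Fin (2*N)) (Fin (2*N)) ℂ) ⊗ₖ Amat + tridiag (2*N) (c:ℂ) 0 ⊗ₖ Bmat).submatrix
          (Equiv.prodAssoc (Fin (2*N)) (Fin (2*M)) (Fin (2*L)))
          (Equiv.prodAssoc (Fin (2*N)) (Fin (2*M)) (Fin (2*L))) := by
    ext ⟨⟨i1,i2⟩,i3⟩ ⟨⟨j1,j2⟩,j3⟩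
    simp only [Kmat, hAmat', hNb, hJl, hJm, hBmat, Matrix.submatrix_apply, Equiv.prodAssoc_apply,
      Matrix.add_apply, Matrix.kroneckerMap_apply]
    ring
  rw [hassoc, Matrix.det_submatrix_equiv_self, det_one_kron_add_tridiag_kron]
  -- matrix algebra facts
  have hBB : Bmat * Bmat = 1 := by
    rw [hBmat, ← Matrix.mul_kronecker_mul, hJl, hJm, antidiag_mul_antidiag,
      antidiag_mul_antidiag, Matrix.one_kronecker_one]
  have hanti_l : Jl * Na = -(Na * Jl) := by rw [hJl, hNa]; exact antidiag_tridiag_anticomm _ _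
  have hanti_m : Jm * Nb = -(Nb * Jm) := by rw [hJm, hNb]; exact antidiag_tridiag_anticomm _ _
  have hA0B : A0 * Bmat = -(Bmat * A0) := by
    rw [hA0, hBmat, add_mul, mul_add, ← Matrix.mul_kronecker_mul, ← Matrix.mul_kronecker_mul,
      ← Matrix.mul_kronecker_mul, ← Matrix.mul_kronecker_mul]
    rw [one_mul, mul_one, hanti_l, hanti_m, antidiag_mul_antidiag]
    rw [kronecker_neg', neg_kronecker', neg_add]
    simp [neg_neg]
  have hAmat : Amat = (x:ℂ) • 1 + A0 := by
    rw [hAmat', hA0, hNa, tridiag_split (2*L) (a:ℂ) (x:ℂ), Matrix.kronecker_add,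
      Matrix.kronecker_smul, Matrix.one_kronecker_one, add_assoc]
  have hA0sq : A0 * A0 = (1 : Matrix (Fin (2*M)) (Fin (2*M)) ℂ) ⊗ₖ (Na * Na)
      + (Nb * Nb) ⊗ₖ (1 : Matrix (Fin (2*L)) (Fin (2*L)) ℂ) := by
    rw [hA0, add_mul, mul_add, mul_add, ← Matrix.mul_kronecker_mul, ← Matrix.mul_kronecker_mul,
      ← Matrix.mul_kronecker_mul, ← Matrix.mul_kronecker_mul]
    rw [one_mul, one_mul, mul_one, hanti_l, antidiag_mul_antidiag, kronecker_neg']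
    abel
  -- step B : fold Fin-product to range-product and pair
  show (∏ j : Fin (2*N), (Amat + ev (2*N) (c:ℂ) (j:ℕ) • Bmat).det) = _
  rw [Fin.prod_univ_eq_prod_range
    (fun j => (Amat + ev (2*N) (c:ℂ) j • Bmat).det) (2*N)]
  rw [prod_range_two_mul_pair]
  -- per-j computation
  have hperj : ∀ j ∈ Finset.range N,
      (Amat + ev (2*N) (c:ℂ) j • Bmat).det * (Amat + ev (2*N) (c:ℂ) (2*N-1-j) • Bmat).det
      = ∏ s' ∈ Finset.range M, ∏ k' ∈ Finset.range L,
          (((x:ℂ)^2 - ev (2*N) (c:ℂ) j ^ 2) - ev (2*M) (b:ℂ) s' ^ 2 - ev (2*L) (a:ℂ) k' ^ 2)^4 := by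
    intro j hj
    rw [Finset.mem_range] at hj
    rw [ev_reflect N (c:ℂ) j hj, neg_smul, hAmat, ← sub_eq_add_neg]
    rw [det_anticomm A0 Bmat hBB hA0B (x:ℂ) (ev (2*N) (c:ℂ) j), hA0sq, sub_add_eq_sub_sub]
    rw [det_w_sub_sq (2*L) (2*M) (a:ℂ) (b:ℂ) ((x:ℂ)^2 - ev (2*N) (c:ℂ) j ^ 2)]
    -- now pair the two inner products
    have inner_eq : ∀ wc : ℂ, ∏ k' : Fin (2*L), (wc - ev (2*L) (a:ℂ) (k':ℕ) ^ 2)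
        = ∏ k' ∈ Finset.range L, (wc - ev (2*L) (a:ℂ) k' ^ 2)^2 := by
      intro wc
      rw [Fin.prod_univ_eq_prod_range (fun k' => wc - ev (2*L) (a:ℂ) k' ^ 2) (2*L),
        prod_range_two_mul_pair]
      apply Finset.prod_congr rfl
      intro k' hk'
      rw [Finset.mem_range] at hk'
      rw [ev_reflect L (a:ℂ) k' hk', neg_sq]; ring
    show (∏ s' : Fin (2*M), ∏ k' : Fin (2*L),
        ((((x:ℂ)^2 - ev (2*N) (c:ℂ) j ^ 2) - ev (2*M) (b:ℂ) (s':ℕ) ^ 2)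
          - ev (2*L) (a:ℂ) (k':ℕ) ^ 2)) = _
    rw [Finset.prod_congr rfl (fun s' _ => inner_eq _)]
    rw [Fin.prod_univ_eq_prod_range
      (fun s' => ∏ k' ∈ Finset.range L,
        ((((x:ℂ)^2 - ev (2*N) (c:ℂ) j ^ 2) - ev (2*M) (b:ℂ) s' ^ 2) - ev (2*L) (a:ℂ) k' ^ 2)^2) (2*M)]
    rw [prod_range_two_mul_pair]
    apply Finset.prod_congr rfl
    intro s' hs'
    rw [Finset.mem_range] at hs'
    rw [ev_reflect M (b:ℂ) s' hs', neg_sq, ← Finset.prod_mul_distrib]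
    apply Finset.prod_congr rfl
    intro k' _
    ring
  rw [Finset.prod_congr rfl hperj]
  -- final cast
  have hreal : (∏ j ∈ Finset.Icc 1 N, ∏ s ∈ Finset.Icc 1 M, ∏ k ∈ Finset.Icc 1 L,
        (x ^ 2 + 4 * a ^ 2 * Real.cos ((k : ℝ) * Real.pi / (2 * (L : ℝ) + 1)) ^ 2
          + 4 * b ^ 2 * Real.cos ((s : ℝ) * Real.pi / (2 * (M : ℝ) + 1)) ^ 2
          + 4 * c ^ 2 * Real.cos ((j : ℝ) * Real.pi / (2 * (N : ℝ) + 1)) ^ 2) ^ 4)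
      = ∏ j ∈ Finset.range N, ∏ s' ∈ Finset.range M, ∏ k' ∈ Finset.range L,
        (x ^ 2 + 4 * a ^ 2 * Real.cos (((k':ℝ)+1) * Real.pi / (((2*L:ℕ):ℝ) + 1)) ^ 2
          + 4 * b ^ 2 * Real.cos (((s':ℝ)+1) * Real.pi / (((2*M:ℕ):ℝ) + 1)) ^ 2
          + 4 * c ^ 2 * Real.cos (((j:ℝ)+1) * Real.pi / (((2*N:ℕ):ℝ) + 1)) ^ 2) ^ 4 := by
    rw [prod_Icc_one]
    apply Finset.prod_congr rfl
    intro j _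
    rw [prod_Icc_one]
    apply Finset.prod_congr rfl
    intro s' _
    rw [prod_Icc_one]
    apply Finset.prod_congr rfl
    intro k' _
    have e1 : ((1+k':ℕ):ℝ) * Real.pi / (2*(L:ℝ)+1) = ((k':ℝ)+1) * Real.pi / (((2*L:ℕ):ℝ)+1) := by
      push_cast; ring
    have e2 : ((1+s':ℕ):ℝ) * Real.pi / (2*(M:ℝ)+1) = ((s':ℝ)+1) * Real.pi / (((2*M:ℕ):ℝ)+1) := by
      push_cast; ring
    have e3 : ((1+j:ℕ):ℝ) * Real.pi / (2*(N:ℝ)+1) = ((j:ℝ)+1) * Real.pi / (((2*N:ℕ):ℝ)+1) := by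
      push_cast; ring
    rw [e1, e2, e3]
  rw [hreal, Complex.ofReal_prod]
  apply Finset.prod_congr rfl
  intro j _
  rw [Complex.ofReal_prod]
  apply Finset.prod_congr rfl
  intro s' _
  rw [Complex.ofReal_prod]
  apply Finset.prod_congr rfl
  intro k' _
  rw [ev_sq (2*N) c j, ev_sq (2*M) b s', ev_sq (2*L) a k']
  push_cast
  ring
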